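/- arXiv:1809.00566 — 4 statements merged into one kernel-verified Lean document; each statement's English description precedes it below -/
import Mathlib

section
/- For every natural number n ≥ 1, n = Σ_{k=1}^{n} (−μ(2k+1)) · ⌊(n+k+1)/(2k+1)⌋, where μ is the Möbius function. -/
/-! For odd `m = 2j+1`, `∑_{d ∣ m} μ d` vanishes unless `j = 0`. Summing this over `j ≤ n`
and exchanging the sums weights each odd `d = 2k+1` by the number of its odd multiples up to
`2n+1`, namely `⌊(n+k+1)/(2k+1)⌋`, so `∑_{k ≤ n} μ(2k+1) ⌊(n+k+1)/(2k+1)⌋ = 1`; the term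
`k = 0` equals `n+1`. -/

open ArithmeticFunction ArithmeticFunction.Moebius Finset

theorem dvd_two_mul_add_one_iff_dvd_add (k n : ℕ) :
    2 * k + 1 ∣ 2 * n + 1 ↔ 2 * k + 1 ∣ n + k + 1 := by
  have hcop : (2 * k + 1).Coprime 2 := by simp
  rw [← hcop.dvd_mul_left (n := n + k + 1),
    show 2 * (n + k + 1) = 2 * n + 1 + (2 * k + 1) by ring, Nat.dvd_add_self_right]

theorem card_filter_dvd_two_mul_add_one (n k : ℕ) :
    #{j ∈ range n | 2 * k + 1 ∣ 2 * j + 1} = (n + k) / (2 * k + 1) := by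
  induction n with
  | zero => exact (Nat.div_eq_of_lt (by omega)).symm
  | succ n ih =>
    rw [range_add_one, filter_insert, add_right_comm, Nat.succ_div, ← ih]
    simp only [dvd_two_mul_add_one_iff_dvd_add]
    split_ifs
    · exact card_insert_of_notMem (by simp)
    · rfl

theorem sum_moebius_divisors (m : ℕ) : ∑ d ∈ m.divisors, μ d = if m = 1 then 1 else 0 := by
  rw [← coe_mul_zeta_apply, moebius_mul_coe_zeta, one_apply]

theorem divisors_eq_map_filter_range_of_odd {m n : ℕ} (hm : Odd m) (hmn : m < 2 * n) :
    m.divisors = {k ∈ range n | 2 * k + 1 ∣ m}.map ⟨(2 * · + 1), fun _ _ ↦ by simp⟩ := by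
  ext d
  simp only [Nat.mem_divisors, mem_map, mem_filter, mem_range]
  constructor
  · rintro ⟨hdvd, hm0⟩
    obtain ⟨k, rfl⟩ := hm.of_dvd_nat hdvd
    exact ⟨k, ⟨by linarith [Nat.le_of_dvd (Nat.pos_of_ne_zero hm0) hdvd], hdvd⟩, rfl⟩
  · rintro ⟨k, ⟨-, hdvd⟩, rfl⟩
    exact ⟨hdvd, hm.pos.ne'⟩

theorem sum_range_moebius_mul_div (n : ℕ) :
    ∑ k ∈ range (n + 1), μ (2 * k + 1) * (((n + k + 1) / (2 * k + 1) : ℕ) : ℤ) = 1 := by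
  have hdiv (j) (hj : j ∈ range (n + 1)) :
      ∑ k ∈ range (n + 1) with 2 * k + 1 ∣ 2 * j + 1, μ (2 * k + 1) =
        ∑ d ∈ (2 * j + 1).divisors, μ d := by
    rw [divisors_eq_map_filter_range_of_odd (n := n + 1) (odd_two_mul_add_one j)
      (by simp at hj; omega), sum_map]
    rfl
  calc ∑ k ∈ range (n + 1), μ (2 * k + 1) * (((n + k + 1) / (2 * k + 1) : ℕ) : ℤ)
      = ∑ k ∈ range (n + 1), ∑ j ∈ range (n + 1),
          if 2 * k + 1 ∣ 2 * j + 1 then μ (2 * k + 1) else 0 := by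
        refine sum_congr rfl fun k _ ↦ ?_
        rw [add_right_comm, ← card_filter_dvd_two_mul_add_one, card_filter, Nat.cast_sum,
          mul_sum]
        simp
    _ = ∑ j ∈ range (n + 1), ∑ d ∈ (2 * j + 1).divisors, μ d := by
        rw [sum_comm]
        exact sum_congr rfl fun j hj ↦ by rw [← sum_filter, hdiv j hj]
    _ = 1 := by simp [sum_moebius_divisors]

open ArithmeticFunction ArithmeticFunction.Moebius in
theorem stmt_11_general (n : ℕ) :
    (n : ℤ) = ∑ k ∈ Finset.Icc 1 n,
      (-(μ (2 * k + 1))) * (((n + k + 1) / (2 * k + 1) : ℕ) : ℤ) := by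
  have h := sum_range_moebius_mul_div n
  rw [range_eq_Ico, sum_eq_sum_Ico_succ_bot (by omega : 0 < n + 1), Ico_add_one_right_eq_Icc] at h
  simp only [mul_zero, zero_add, add_zero, Nat.div_one, moebius_apply_one, one_mul,
    Nat.cast_add_one] at h
  simp only [neg_mul, sum_neg_distrib]
  linarith

open ArithmeticFunction ArithmeticFunction.Moebius in
theorem stmt_11 (n : ℕ) (hn : 1 ≤ n) :
    (n : ℤ) = ∑ k ∈ Finset.Icc 1 n,
      (-(μ (2 * k + 1))) * (((n + k + 1) / (2 * k + 1) : ℕ) : ℤ) :=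
  stmt_11_general n
end

section
/- For every natural number n, 1 = Σ_{k=0}^{n} μ(2k+1) · ⌊(n+k+1)/(2k+1)⌋, where μ is the Möbius function. -/
/-! `⌊(n+k+1)/(2k+1)⌋` is the number of `j ≤ n` with `2k+1 ∣ 2j+1`. Exchanging the order of
summation, the right-hand side becomes `∑_{j ≤ n} ∑_{d ∣ 2j+1} μ d`, and the inner sum vanishes
unless `2j+1 = 1`. -/

open ArithmeticFunction Finset
open scoped ArithmeticFunction.Moebius ArithmeticFunction.zeta

lemma sum_divisors_moebius (m : ℕ) :
    ∑ d ∈ m.divisors, (μ d : ℤ) = if m = 1 then 1 else 0 := by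
  have h : (μ * ζ : ArithmeticFunction ℤ) m = (1 : ArithmeticFunction ℤ) m := by
    rw [moebius_mul_coe_zeta]
  rwa [coe_mul_zeta_apply, one_apply] at h

lemma Nat.two_mul_add_one_dvd_two_mul_add_one_iff {j k : ℕ} :
    2 * k + 1 ∣ 2 * j + 1 ↔ 2 * k + 1 ∣ k + j + 1 := by
  have hcop : Nat.Coprime (2 * k + 1) 2 := by simp
  rw [← hcop.dvd_mul_left (n := k + j + 1),
    show 2 * (k + j + 1) = 2 * j + 1 + (2 * k + 1) by ring, Nat.dvd_add_left (dvd_refl _)]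

lemma Nat.card_filter_range_dvd_add_add_one (d k N : ℕ) :
    #{j ∈ range N | d ∣ k + j + 1} = (k + N) / d - k / d := by
  have h := Nat.count_add (p := fun e ↦ d ∣ e + 1) k N
  simp only [Nat.count_eq_card_filter_range, Nat.card_multiples] at h
  omega

lemma Nat.card_filter_range_two_mul_add_one_dvd (n k : ℕ) :
    #{j ∈ range (n + 1) | 2 * k + 1 ∣ 2 * j + 1} = (n + k + 1) / (2 * k + 1) := by
  simp_rw [Nat.two_mul_add_one_dvd_two_mul_add_one_iff, Nat.card_filter_range_dvd_add_add_one,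
    Nat.div_eq_of_lt (show k < 2 * k + 1 by omega), Nat.sub_zero, add_comm k, add_right_comm]

lemma sum_filter_range_two_mul_add_one_dvd {M : Type*} [AddCommMonoid M] (f : ℕ → M)
    {n j : ℕ} (hj : j ≤ n) :
    ∑ k ∈ range (n + 1) with 2 * k + 1 ∣ 2 * j + 1, f (2 * k + 1) =
      ∑ d ∈ (2 * j + 1).divisors, f d := by
  have hodd : ∀ d ∈ (2 * j + 1).divisors, d % 2 = 1 ∧ d ≤ 2 * j + 1 := fun d hd ↦ by
    rw [Nat.mem_divisors] at hd
    exact ⟨Nat.odd_iff.mp ((odd_two_mul_add_one j).of_dvd_nat hd.1),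
      Nat.le_of_dvd (by omega) hd.1⟩
  refine sum_nbij' (fun k ↦ 2 * k + 1) (fun d ↦ d / 2) (fun k hk ↦ ?_) (fun d hd ↦ ?_)
    (fun k _ ↦ by omega) (fun d hd ↦ by have := hodd d hd; omega) (fun _ _ ↦ rfl)
  · simpa using (mem_filter.mp hk).2
  · obtain ⟨hd2, hdle⟩ := hodd d hd
    have hd' := (Nat.mem_divisors.mp hd).1
    simp only [mem_filter, mem_range]
    exact ⟨by omega, by rwa [show 2 * (d / 2) + 1 = d by omega]⟩

open ArithmeticFunction ArithmeticFunction.Moebius in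
theorem stmt_12 (n : ℕ) :
    (1 : ℤ) = ∑ k ∈ Finset.range (n + 1),
      (μ (2 * k + 1)) * (((n + k + 1) / (2 * k + 1) : ℕ) : ℤ) := by
  calc (1 : ℤ)
      = ∑ j ∈ range (n + 1), if j = 0 then 1 else 0 := by simp
    _ = ∑ j ∈ range (n + 1), ∑ k ∈ range (n + 1),
          if 2 * k + 1 ∣ 2 * j + 1 then (μ (2 * k + 1) : ℤ) else 0 := by
        refine sum_congr rfl fun j hj ↦ ?_
        have hjn : j ≤ n := Nat.lt_succ_iff.mp (mem_range.mp hj)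
        rw [← sum_filter, sum_filter_range_two_mul_add_one_dvd _ hjn, sum_divisors_moebius]
        simp
    _ = _ := by
        rw [sum_comm]
        refine sum_congr rfl fun k _ ↦ ?_
        rw [← sum_filter, sum_const, Nat.card_filter_range_two_mul_add_one_dvd, nsmul_eq_mul,
          mul_comm]
end

section
/- For every positive integer n, |Σ_{k=0}^{n} μ(2k+1)/(2k+1)| < 2, where μ is the Möbius function. -/
/-!
With `N = 2n + 1`, Möbius inversion restricted to odd numbers gives the exact identity
`∑_{d ≤ N odd} μ(d) ⌊(⌊N/d⌋ + 1)/2⌋ = 1`, the integer part counting the odd multiples of `d`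
up to `N`. Each count differs from `N/(2d)` by at most `1/2`, so `N/2 · ∑ μ(d)/d` is within
`(n + 1)/2` of `1`, whence `|∑ μ(d)/d| ≤ (n + 3)/(2n + 1) < 2` for `n ≥ 1`.
-/

open ArithmeticFunction ArithmeticFunction.Moebius Finset
open scoped ArithmeticFunction.zeta

namespace ArithmeticFunction

variable {R : Type*}

def oddPart [Zero R] (f : ArithmeticFunction R) : ArithmeticFunction R :=
  ⟨fun n => if Odd n then f n else 0, by simp⟩

@[simp]
theorem oddPart_apply [Zero R] (f : ArithmeticFunction R) (n : ℕ) :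
    oddPart f n = if Odd n then f n else 0 := rfl

theorem oddPart_mul [Semiring R] (f g : ArithmeticFunction R) :
    oddPart (f * g) = oddPart f * oddPart g := by
  ext m
  simp only [oddPart_apply, mul_apply]
  split_ifs with hm
  · refine sum_congr rfl fun x hx => ?_
    rw [← (Nat.mem_divisorsAntidiagonal.mp hx).1, Nat.odd_mul] at hm
    simp [hm.1, hm.2]
  · refine (sum_eq_zero fun x hx => ?_).symm
    rw [← (Nat.mem_divisorsAntidiagonal.mp hx).1, Nat.odd_mul, not_and_or] at hm
    rcases hm with h | h <;> simp [h]

theorem oddPart_one [Semiring R] : oddPart (1 : ArithmeticFunction R) = 1 := by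
  ext m
  by_cases hm : m = 1 <;> simp [hm]

theorem oddPart_moebius_mul_oddPart_zeta :
    oddPart (μ : ArithmeticFunction ℤ) * oddPart (ζ : ArithmeticFunction ℤ) = 1 := by
  rw [← oddPart_mul, moebius_mul_coe_zeta, oddPart_one]

end ArithmeticFunction

theorem Finset.sum_Ioc_filter_odd {M : Type*} [AddCommMonoid M] (f : ℕ → M) (N : ℕ) :
    ∑ d ∈ Ioc 0 N with Odd d, f d = ∑ k ∈ range ((N + 1) / 2), f (2 * k + 1) := by
  have hodd : {d ∈ Ioc 0 N | Odd d} = (range ((N + 1) / 2)).image (2 * · + 1) := by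
    ext d
    simp only [mem_filter, mem_Ioc, mem_image, mem_range, Nat.odd_iff]
    constructor
    · rintro ⟨⟨-, hdN⟩, hd⟩
      exact ⟨d / 2, by omega, by omega⟩
    · rintro ⟨k, hk, rfl⟩
      omega
  rw [hodd, sum_image fun a _ b _ h => by simpa using h]

theorem ArithmeticFunction.sum_Ioc_oddPart_zeta (N : ℕ) :
    ∑ d ∈ Ioc 0 N, oddPart (ζ : ArithmeticFunction ℤ) d = ((N + 1) / 2 : ℕ) := by
  simp only [oddPart_apply, ← sum_filter, sum_Ioc_filter_odd, natCoe_apply, zeta_apply]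
  simp

theorem sum_Ioc_filter_odd_moebius_mul (N : ℕ) (hN : 0 < N) :
    ∑ d ∈ Ioc 0 N with Odd d, (μ d : ℤ) * ((N / d + 1) / 2 : ℕ) = 1 := by
  have h := sum_Ioc_mul_eq_sum_sum (oddPart (μ : ArithmeticFunction ℤ)) (oddPart ζ) N
  simp only [oddPart_moebius_mul_oddPart_zeta, one_apply, sum_ite_eq', sum_Ioc_oddPart_zeta] at h
  simp only [oddPart_apply, ite_mul, zero_mul, ← sum_filter] at h
  rw [← h, if_pos (mem_Ioc.mpr ⟨one_pos, hN⟩)]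

theorem sum_range_moebius_odd_mul (n : ℕ) :
    ∑ k ∈ range (n + 1), (μ (2 * k + 1) : ℝ) * (((2 * n + 1) / (2 * k + 1) + 1) / 2 : ℕ) = 1 := by
  have h := sum_Ioc_filter_odd_moebius_mul (2 * n + 1) (Nat.succ_pos _)
  rw [sum_Ioc_filter_odd, show (2 * n + 1 + 1) / 2 = n + 1 by omega] at h
  simpa only [Int.cast_sum, Int.cast_mul, Int.cast_natCast, Int.cast_one]
    using congrArg (Int.cast : ℤ → ℝ) h

theorem abs_half_sub_half_floor_succ_le {x : ℝ} (hx : 0 ≤ x) :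
    |x / 2 - ((⌊x⌋₊ + 1) / 2 : ℕ)| ≤ 1 / 2 := by
  set q := ⌊x⌋₊
  have hq : (q : ℝ) ≤ x ∧ x < q + 1 := ⟨Nat.floor_le hx, Nat.lt_floor_add_one x⟩
  have hc : q ≤ 2 * ((q + 1) / 2) ∧ 2 * ((q + 1) / 2) ≤ q + 1 := by omega
  have hc' : (q : ℝ) ≤ 2 * ((q + 1) / 2 : ℕ) ∧ (2 * ((q + 1) / 2 : ℕ) : ℝ) ≤ q + 1 := by
    exact_mod_cast hc
  rw [abs_le]
  constructor <;> linarith [hq.1, hq.2, hc'.1, hc'.2]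

theorem abs_mul_sum_moebius_odd_div_sub_one_le (n : ℕ) :
    |(2 * n + 1) / 2 * ∑ k ∈ range (n + 1), (μ (2 * k + 1) : ℝ) / (2 * k + 1) - 1| ≤ (n + 1) / 2 := by
  calc _ = |∑ k ∈ range (n + 1), ((2 * n + 1) / 2 * ((μ (2 * k + 1) : ℝ) / (2 * k + 1))
          - (μ (2 * k + 1) : ℝ) * (((2 * n + 1) / (2 * k + 1) + 1) / 2 : ℕ))| := by
        rw [sum_sub_distrib, sum_range_moebius_odd_mul, mul_sum]
    _ ≤ ∑ k ∈ range (n + 1), (1 / 2 : ℝ) := by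
        refine (abs_sum_le_sum_abs _ _).trans (sum_le_sum fun k _ => ?_)
        have hround := abs_half_sub_half_floor_succ_le
          (div_nonneg (2 * n + 1 : ℕ).cast_nonneg (2 * k + 1 : ℕ).cast_nonneg)
        rw [Nat.floor_div_eq_div] at hround
        have hμ : |(μ (2 * k + 1) : ℝ)| ≤ 1 := by exact_mod_cast abs_moebius_le_one
        calc _ = |(μ (2 * k + 1) : ℝ)| * |((2 * n + 1 : ℕ) : ℝ) / (2 * k + 1 : ℕ) / 2
              - (((2 * n + 1) / (2 * k + 1) + 1) / 2 : ℕ)| := by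
              rw [← abs_mul]; congr 1; push_cast; field_simp
          _ ≤ 1 * (1 / 2) := mul_le_mul hμ hround (abs_nonneg _) zero_le_one
          _ = 1 / 2 := one_mul _
    _ = (n + 1) / 2 := by
      rw [sum_const, card_range, nsmul_eq_mul]; push_cast; ring

open ArithmeticFunction ArithmeticFunction.Moebius in
theorem stmt_13 (n : ℕ) (hn : 1 ≤ n) :
    |∑ k ∈ Finset.range (n + 1), (μ (2 * k + 1) : ℝ) / (2 * k + 1)| < 2 := by
  have h := abs_mul_sum_moebius_odd_div_sub_one_le n
  have hn' : (1 : ℝ) ≤ n := by exact_mod_cast hn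
  set A := ∑ k ∈ Finset.range (n + 1), (μ (2 * k + 1) : ℝ) / (2 * k + 1)
  have hA := abs_sub_abs_le_abs_sub ((2 * n + 1) / 2 * A) 1
  rw [abs_mul, abs_of_pos (by positivity : (0 : ℝ) < (2 * n + 1) / 2), abs_one] at hA
  nlinarith [abs_nonneg A]
end

section
/- Assuming Σ_{n=1}^{∞} μ(n)/n = 0, the series Σ_{n=0}^{∞} μ(2n+1)/(2n+1) converges to 0, and consequently Σ_{n=2}^{∞} (−μ(2n+1))/(2n+1) = 2/3. -/
/-!
Write `S N = ∑_{n ≤ N} μ(n)/n` and `T N = ∑_{n < N} μ(2n+1)/(2n+1)`. Since `μ(2m) = -μ(m)` for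
odd `m` and `μ(2m) = 0` for even `m`, the even terms of `S (2N)` are `-T ⌈N/2⌉ / 2`, so
`T N = S (2N) + T ⌈N/2⌉ / 2`. A convergent `S` is bounded, which makes `T` bounded, and then
`L = limsup |T N|` satisfies `L ≤ 0 + L/2`, so `T → 0`. The second series is `-T` with its first
two terms `μ(1)/1 + μ(3)/3 = 2/3` removed.
-/

open ArithmeticFunction ArithmeticFunction.Moebius Finset Filter Topology

lemma enorm_div_two (x : ℝ) : ‖x / 2‖ₑ = ‖x‖ₑ / 2 := by
  rw [← ofReal_norm, ← ofReal_norm, norm_div, Real.norm_two, ENNReal.ofReal_div_of_pos two_pos,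
    ENNReal.ofReal_ofNat]

lemma abs_le_of_eq_add_half_comp {a b : ℕ → ℝ} {f : ℕ → ℕ} {C : ℝ} (hb : ∀ n, |b n| ≤ C)
    (hf : ∀ n, f n ≤ n) (hab : ∀ n, a n = b n + a (f n) / 2) (n : ℕ) : |a n| ≤ 2 * C := by
  induction n using Nat.strong_induction_on with
  | _ n ih =>
    rcases (hf n).lt_or_eq with hlt | heq
    · calc |a n| ≤ |b n| + |a (f n)| / 2 := by
            rw [hab n]; exact (abs_add_le _ _).trans_eq (by rw [abs_div, abs_two])
        _ ≤ 2 * C := by linarith [hb n, ih _ hlt]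
    · have : a n = 2 * b n := by linarith [hab n, congrArg a heq]
      rw [this, abs_mul, abs_two]; linarith [hb n]

lemma tendsto_zero_of_eq_add_half_comp {a b : ℕ → ℝ} {f : ℕ → ℕ} {C : ℝ} (ha : ∀ n, |a n| ≤ C)
    (hb : Tendsto b atTop (𝓝 0)) (hf : Tendsto f atTop atTop)
    (hab : ∀ n, a n = b n + a (f n) / 2) : Tendsto a atTop (𝓝 0) := by
  set L := limsup (fun n => ‖a n‖ₑ) atTop
  have hL_ne_top : L ≠ ⊤ := by
    refine ne_top_of_le_ne_top (ENNReal.ofReal_ne_top (r := C))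
      (limsup_le_of_le (by isBoundedDefault) (.of_forall fun n => ?_))
    rw [← ofReal_norm]
    exact ENNReal.ofReal_le_ofReal (ha n)
  have hL_le : L ≤ L / 2 := calc
    L ≤ limsup ((fun n => ‖b n‖ₑ) + fun n => ‖a (f n)‖ₑ / 2) atTop := by
        refine limsup_le_limsup (.of_forall fun n => ?_)
        show ‖a n‖ₑ ≤ ‖b n‖ₑ + ‖a (f n)‖ₑ / 2
        rw [hab n, ← enorm_div_two]
        exact enorm_add_le _ _
    _ = limsup (fun n => ‖a (f n)‖ₑ) atTop / 2 := by
        rw [ENNReal.limsup_add_of_left_tendsto_zero (tendsto_zero_iff_enorm_tendsto_zero.1 hb)]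
        simp_rw [div_eq_mul_inv]
        exact (ENNReal.limsup_mul_const_of_ne_top (by simp)).trans (mul_comm _ _)
    _ ≤ L / 2 := by gcongr; exact hf.limsup_comp_le_limsup (u := fun n => ‖a n‖ₑ)
  have hL : L = 0 := by
    by_contra h
    exact (ENNReal.half_lt_self h hL_ne_top).not_ge hL_le
  exact tendsto_zero_iff_enorm_tendsto_zero.2 (tendsto_of_le_liminf_of_limsup_le zero_le hL.le)

lemma moebius_two_mul_of_odd {m : ℕ} (hm : Odd m) : μ (2 * m) = -μ m := by
  rw [isMultiplicative_moebius.map_mul_of_coprime (Nat.coprime_two_left.mpr hm),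
    moebius_apply_prime Nat.prime_two, neg_one_mul]

lemma moebius_two_mul_of_even {m : ℕ} (hm : Even m) : μ (2 * m) = 0 := by
  obtain ⟨k, rfl⟩ := hm
  refine moebius_eq_zero_of_not_squarefree fun h => ?_
  exact absurd (h 2 ⟨k, by ring⟩) (by decide)

noncomputable def moebiusPartialSum (N : ℕ) : ℝ := ∑ n ∈ Icc 1 N, (μ n : ℝ) / n

noncomputable def oddMoebiusPartialSum (N : ℕ) : ℝ :=
  ∑ n ∈ range N, (μ (2 * n + 1) : ℝ) / (2 * n + 1)

lemma moebiusPartialSum_succ (N : ℕ) :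
    moebiusPartialSum (N + 1) = moebiusPartialSum N + (μ (N + 1) : ℝ) / (N + 1 : ℕ) :=
  sum_Icc_succ_top (by omega) _

lemma oddMoebiusPartialSum_succ (N : ℕ) :
    oddMoebiusPartialSum (N + 1) = oddMoebiusPartialSum N + (μ (2 * N + 1) : ℝ) / (2 * N + 1) :=
  sum_range_succ _ _

-- The difference on the right is `μ m / m` for odd `m` and `0` for even `m`.
lemma moebius_two_mul_div_two_mul (m : ℕ) :
    (μ (2 * m) : ℝ) / (2 * m : ℕ) =
      -(oddMoebiusPartialSum ((m + 1) / 2) - oddMoebiusPartialSum (m / 2)) / 2 := by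
  rcases Nat.even_or_odd' m with ⟨k, rfl | rfl⟩
  · rw [moebius_two_mul_of_even (even_two_mul k), show (2 * k + 1) / 2 = 2 * k / 2 by omega]
    simp
  · rw [moebius_two_mul_of_odd (odd_two_mul_add_one k), show (2 * k + 1 + 1) / 2 = k + 1 by omega,
      show (2 * k + 1) / 2 = k by omega, oddMoebiusPartialSum_succ]
    push_cast
    field_simp
    ring

lemma oddMoebiusPartialSum_eq_add_half (N : ℕ) :
    oddMoebiusPartialSum N =
      moebiusPartialSum (2 * N) + oddMoebiusPartialSum ((N + 1) / 2) / 2 := by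
  induction N with
  | zero => simp [moebiusPartialSum, oddMoebiusPartialSum]
  | succ N ih =>
    have h := moebius_two_mul_div_two_mul (N + 1)
    rw [show 2 * (N + 1) = 2 * N + 1 + 1 by ring] at h ⊢
    rw [oddMoebiusPartialSum_succ, moebiusPartialSum_succ, moebiusPartialSum_succ]
    push_cast at h ⊢
    linarith

lemma tendsto_oddMoebiusPartialSum_zero (h : Tendsto moebiusPartialSum atTop (𝓝 0)) :
    Tendsto oddMoebiusPartialSum atTop (𝓝 0) := by
  obtain ⟨C, hC⟩ := h.abs.bddAbove_range
  have hT_bdd := abs_le_of_eq_add_half_comp (b := fun N => moebiusPartialSum (2 * N))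
    (fun N => hC (Set.mem_range_self _)) (fun N => by omega) oddMoebiusPartialSum_eq_add_half
  refine tendsto_zero_of_eq_add_half_comp hT_bdd ?_ ?_ oddMoebiusPartialSum_eq_add_half
  · exact h.comp (tendsto_id.const_mul_atTop' two_pos)
  · exact (Nat.tendsto_div_const_atTop two_ne_zero).comp (tendsto_add_atTop_nat 1)

lemma oddMoebiusPartialSum_two : oddMoebiusPartialSum 2 = 2 / 3 := by
  norm_num [oddMoebiusPartialSum, sum_range_succ, moebius_apply_prime Nat.prime_three]

lemma sum_Icc_two_neg_moebius_odd {N : ℕ} (hN : 1 ≤ N) :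
    ∑ n ∈ Icc 2 N, (-(μ (2 * n + 1)) : ℝ) / (2 * n + 1) = 2 / 3 - oddMoebiusPartialSum (N + 1) := by
  rw [oddMoebiusPartialSum, ← sum_range_add_sum_Ico _ (by omega : 2 ≤ N + 1),
    ← oddMoebiusPartialSum, oddMoebiusPartialSum_two, Ico_add_one_right_eq_Icc]
  simp [neg_div]

open ArithmeticFunction ArithmeticFunction.Moebius in
theorem stmt_17
    (h : Filter.Tendsto (fun N : ℕ => ∑ n ∈ Finset.Icc 1 N, (μ n : ℝ) / n)
      Filter.atTop (nhds 0)) :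
    Filter.Tendsto (fun N : ℕ => ∑ n ∈ Finset.range N, (μ (2 * n + 1) : ℝ) / (2 * n + 1))
      Filter.atTop (nhds 0) ∧
    Filter.Tendsto (fun N : ℕ => ∑ n ∈ Finset.Icc 2 N, (-(μ (2 * n + 1)) : ℝ) / (2 * n + 1))
      Filter.atTop (nhds (2 / 3)) := by
  have hT : Tendsto oddMoebiusPartialSum atTop (𝓝 0) := tendsto_oddMoebiusPartialSum_zero h
  refine ⟨hT, ?_⟩
  have hT' := (hT.comp (tendsto_add_atTop_nat 1)).const_sub (2 / 3 : ℝ)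
  rw [sub_zero] at hT'
  refine hT'.congr' ?_
  filter_upwards [eventually_ge_atTop 1] with N hN
  exact (sum_Icc_two_neg_moebius_odd hN).symm
end
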